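/- Let C be an extended Choquet cone with an abundance of compact idempotents and let w be a compact idempotent of C. Set A_w(C) = {f ∈ A(C) : supp(f) = w} and A_+(C_w) = {f : C_w → [0,∞) : f is continuous, linear, and f(x) = 0 if and only if x = w}. Then the restriction map f ↦ f|_{C_w} is an ordered cone isomorphism from A_w(C) onto A_+(C_w): it is additive, homogeneous with respect to scalar multiplication, bijective, and both it and its inverse are order preserving. -/

import Mathlib

open scoped ENNReal NNReal

/-- The positive real numbers, used as scalars for cones. -/
abbrev PosReal : Type := {t : ℝ // 0 < t}

/-- An extended Choquet cone: an algebraically ordered topological cone that is a lattice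
under the algebraic order, with addition distributing over `⊓` and `⊔`, whose topology is
compact, Hausdorff and locally convex. -/
class ECCone (C : Type*) extends AddCommMonoid C, Lattice C, TopologicalSpace C where
  psmul : PosReal → C → C
  psmul_add : ∀ (t : PosReal) (x y : C), psmul t (x + y) = psmul t x + psmul t y
  add_psmul : ∀ (s t : PosReal) (x : C), psmul (s + t) x = psmul s x + psmul t x
  psmul_mul : ∀ (s t : PosReal) (x : C), psmul s (psmul t x) = psmul (s * t) x
  one_psmul : ∀ x : C, psmul 1 x = x
  psmul_zero : ∀ t : PosReal, psmul t 0 = 0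
  le_iff_exists_add : ∀ x y : C, x ≤ y ↔ ∃ z, x + z = y
  add_inf_distrib : ∀ x y z : C, x + (y ⊓ z) = (x + y) ⊓ (x + z)
  add_sup_distrib : ∀ x y z : C, x + (y ⊔ z) = (x + y) ⊔ (x + z)
  continuous_add' : Continuous fun p : C × C => p.1 + p.2
  continuous_psmul : Continuous fun p : PosReal × C => psmul p.1 p.2
  compact : CompactSpace C
  t2 : T2Space C
  locally_convex : ∀ (x : C) (U : Set C), IsOpen U → x ∈ U →
    ∃ V : Set C, IsOpen V ∧ x ∈ V ∧ V ⊆ U ∧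
      ∀ y ∈ V, ∀ z ∈ V, ∀ s t : PosReal, s.1 + t.1 = 1 → psmul s y + psmul t z ∈ V

/-- The way-below relation for functions into `[0,∞]`, relative to a set `S` of functions:
`f ≪ g` iff for every increasing sequence in `S` whose pointwise supremum dominates `g`,
some term of the sequence dominates `f`. -/
def FWayBelow {α : Type*} (S : Set (α → ℝ≥0∞)) (f g : α → ℝ≥0∞) : Prop :=
  ∀ h : ℕ → α → ℝ≥0∞, (∀ n, h n ∈ S) → Monotone h → (∀ a, g a ≤ ⨆ n, h n a) → ∃ n, f ≤ h n

namespace ECCone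

variable {C : Type*} [ECCone C]

/-- `w` is an idempotent: `2w = w`. -/
def IsIdem (w : C) : Prop := w + w = w

/-- `e` is the support idempotent of `x`: the maximum of `{z : x + z = x}`. -/
def IsSuppIdem (x e : C) : Prop := x + e = x ∧ ∀ z : C, x + z = x → z ≤ e

/-- `w₁ ≫ w₂` in the lattice of idempotents with the opposite order: whenever a nonempty
downward directed family of idempotents has an infimum `≤ w₂`, some member is `≤ w₁`. -/
def IdemWayBelow (w₁ w₂ : C) : Prop :=
  ∀ D : Set C, D.Nonempty → (∀ v ∈ D, IsIdem v) → DirectedOn (· ≥ ·) D →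
    ∀ m : C, IsGLB D m → m ≤ w₂ → ∃ v ∈ D, v ≤ w₁

/-- A compact idempotent: `w ≫ w`. -/
def IsCompactIdem (w : C) : Prop := IsIdem w ∧ IdemWayBelow w w

/-- `v` is compact relative to `w`: whenever a nonempty downward directed family of
idempotents has an infimum `≤ v`, some member `u` satisfies `u ⊓ w ≤ v`. -/
def CompactRelTo (v w : C) : Prop :=
  ∀ D : Set C, D.Nonempty → (∀ u ∈ D, IsIdem u) → DirectedOn (· ≥ ·) D →
    ∀ m : C, IsGLB D m → m ≤ v → ∃ u ∈ D, u ⊓ w ≤ v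

/-- `C` has an abundance of compact idempotents: every idempotent is an infimum
of compact idempotents. -/
def HasAbundantCompactIdem (C : Type*) [ECCone C] : Prop :=
  ∀ w : C, IsIdem w → ∃ D : Set C, (∀ v ∈ D, IsCompactIdem v) ∧ IsGLB D w

/-- `C` is strongly connected: `{x : x ≤ w}` is connected for every idempotent `w`. -/
def StronglyConnected (C : Type*) [ECCone C] : Prop :=
  ∀ w : C, IsIdem w → IsConnected {x : C | x ≤ w}

/-- A linear function on a cone: additive, homogeneous, sending `0` to `0`. -/
def IsLinFun (f : C → ℝ≥0∞) : Prop :=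
  f 0 = 0 ∧ (∀ x y : C, f (x + y) = f x + f y) ∧
    ∀ (t : PosReal) (x : C), f (psmul t x) = ENNReal.ofReal t.1 * f x

/-- Membership in `Lsc(C)`: linear and lower semicontinuous. -/
def MemLsc (f : C → ℝ≥0∞) : Prop := IsLinFun f ∧ LowerSemicontinuous f

/-- Membership in `Lsc_σ(C)`: in `Lsc(C)` and `f⁻¹((a,∞])` is σ-compact for all `a < ∞`. -/
def MemLscSigma (f : C → ℝ≥0∞) : Prop :=
  MemLsc f ∧ ∀ a : ℝ≥0, IsSigmaCompact {x : C | (a : ℝ≥0∞) < f x}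

/-- Membership in `A(C)`: linear and continuous. -/
def MemA (f : C → ℝ≥0∞) : Prop := IsLinFun f ∧ Continuous f

/-- `w = supp f`, the supremum of `{x : f x = 0}`. -/
def IsSupp (f : C → ℝ≥0∞) (w : C) : Prop := IsLUB {x : C | f x = 0} w

/-- The relation `f ◁ g`: `f ≤ (1-ε)g` for some `ε > 0`, and `f` is continuous at every
point where `g` is finite. -/
def Lhd (f g : C → ℝ≥0∞) : Prop :=
  (∃ ε : ℝ, 0 < ε ∧ ∀ x, f x ≤ ENNReal.ofReal (1 - ε) * g x) ∧
    ∀ x : C, g x ≠ ⊤ → ContinuousAt f x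

end ECCone

namespace ECCone

variable {C : Type*} [ECCone C]

/-- Membership in `A₊(C_w)`: functions on `C_w = {x : ε(x) = w}` that are continuous,
finite-valued, linear (additive and homogeneous, phrased via the ambient operations),
and vanish exactly at `w`. -/
def MemAPlus (w : C) (g : {x : C // IsSuppIdem x w} → ℝ≥0∞) : Prop :=
  Continuous g ∧ (∀ x, g x ≠ ⊤) ∧
    (∀ x y z : {x : C // IsSuppIdem x w}, x.1 + y.1 = z.1 → g z = g x + g y) ∧
    (∀ (t : PosReal) (x y : {x : C // IsSuppIdem x w}), psmul t x.1 = y.1 →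
      g y = ENNReal.ofReal t.1 * g x) ∧
    (∀ x : {x : C // IsSuppIdem x w}, g x = 0 ↔ x.1 = w)

end ECCone


/-!
Restriction to `C_w` is additive, homogeneous and monotone, and it maps `A_w(C)` into
`A₊(C_w)`: a continuous `f` with support `w` vanishes at `w` (the zero set is closed and
directed) and is finite on `C_w` (since `2⁻ⁿ x → ε(x) = w`). As `f (x + w) = f x`, and `f = ⊤`
wherever `ε(x + w) ≰ w`, such an `f` is determined and ordered by its restriction.

Conversely, `g ∈ A₊(C_w)` extends by `x ↦ g (x + w)` where `x + w ∈ C_w` and by `⊤` elsewhere.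
Compactness of `w` makes `{x | x + w ∈ C_w}` open, because near `w` there are no idempotents
other than those below `w`. It also makes the sublevel sets `{g ≤ M}` closed in `C`: a limit
point whose support idempotent were not below `w` would produce, by Zorn's lemma, a minimal
idempotent limit of points of `C_w` where `g → 0`, and scaling such points onto the frontier of a
neighbourhood of `w` contradicts minimality. Together these give continuity of the extension.
-/
open Filter Topology Set

section CompactOrder

variable {α : Type*} [TopologicalSpace α] [PartialOrder α] [OrderClosedTopology α]

lemma isLUB_of_mapClusterPt {ι : Type*} [Preorder ι] {u : ι → α} (hu : Monotone u) {m : α}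
    (hm : MapClusterPt m atTop u) : IsLUB (range u) m := by
  refine ⟨?_, fun b hb => ?_⟩
  · rintro _ ⟨i, rfl⟩
    have hev : Ici (u i) ∈ map u atTop :=
      mem_map.2 (mem_of_superset (Ici_mem_atTop i) fun _ hj => hu hj)
    simpa [isClosed_Ici.closure_eq] using hm.mem_closure_of_mem _ hev
  · have hev : Iic b ∈ map u atTop := mem_map.2 (univ_mem' fun i => hb ⟨i, rfl⟩)
    simpa [isClosed_Iic.closure_eq] using hm.mem_closure_of_mem _ hev

lemma Monotone.exists_isLUB_tendsto [CompactSpace α] {ι : Type*} [Preorder ι] [Nonempty ι]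
    [IsDirected ι (· ≤ ·)] {u : ι → α} (hu : Monotone u) :
    ∃ m, IsLUB (range u) m ∧ Tendsto u atTop (𝓝 m) := by
  obtain ⟨m, hm⟩ := exists_clusterPt_of_compactSpace (map u atTop)
  have hlub := isLUB_of_mapClusterPt hu hm
  exact ⟨m, hlub, tendsto_nhds_of_unique_mapClusterPt fun m' hm' =>
    (isLUB_of_mapClusterPt hu hm').unique hlub⟩

lemma Antitone.exists_isGLB_tendsto [CompactSpace α] {ι : Type*} [Preorder ι] [Nonempty ι]
    [IsDirected ι (· ≤ ·)] {u : ι → α} (hu : Antitone u) :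
    ∃ m, IsGLB (range u) m ∧ Tendsto u atTop (𝓝 m) :=
  haveI : CompactSpace αᵒᵈ := ‹CompactSpace α›
  Monotone.exists_isLUB_tendsto (α := αᵒᵈ) hu

lemma DirectedOn.exists_isLUB_mem_closure [CompactSpace α] {A : Set α} (hne : A.Nonempty)
    (hdir : DirectedOn (· ≤ ·) A) : ∃ m, IsLUB A m ∧ m ∈ closure A := by
  have : Nonempty A := hne.to_subtype
  have : IsDirected A (· ≤ ·) := ⟨fun a b => by
    obtain ⟨c, hc, hac, hbc⟩ := hdir a a.2 b b.2
    exact ⟨⟨c, hc⟩, hac, hbc⟩⟩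
  obtain ⟨m, hlub, hm⟩ := Monotone.exists_isLUB_tendsto (u := ((↑) : A → α)) fun _ _ h => h
  rw [Subtype.range_coe] at hlub
  exact ⟨m, hlub, mem_closure_of_tendsto hm (Eventually.of_forall fun a => a.2)⟩

lemma DirectedOn.exists_isGLB_mem_closure [CompactSpace α] {A : Set α} (hne : A.Nonempty)
    (hdir : DirectedOn (· ≥ ·) A) : ∃ m, IsGLB A m ∧ m ∈ closure A :=
  haveI : CompactSpace αᵒᵈ := ‹CompactSpace α›
  DirectedOn.exists_isLUB_mem_closure (α := αᵒᵈ) hne hdir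

end CompactOrder

lemma LowerSemicontinuousAt.continuousAt_of_eq_top {α : Type*} [TopologicalSpace α]
    {f : α → ℝ≥0∞} {x : α} (hf : LowerSemicontinuousAt f x) (hx : f x = ⊤) :
    ContinuousAt f x :=
  continuousAt_iff_lower_upperSemicontinuousAt.2
    ⟨hf, fun y (hy : f x < y) => (not_top_lt (hx ▸ hy)).elim⟩

namespace ECCone

variable {C : Type*} [ECCone C]

instance : CompactSpace C := compact
instance : T2Space C := t2
instance : ContinuousAdd C := ⟨continuous_add'⟩

instance : IsOrderedAddMonoid C where
  add_le_add_left a b h c := by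
    obtain ⟨z, rfl⟩ := (le_iff_exists_add a b).1 h
    exact (le_iff_exists_add _ _).2 ⟨z, add_right_comm a c z⟩

instance : CanonicallyOrderedAdd C where
  exists_add_of_le h := by
    obtain ⟨z, rfl⟩ := (le_iff_exists_add _ _).1 h
    exact ⟨z, rfl⟩
  le_add_self a b := (le_iff_exists_add _ _).2 ⟨b, add_comm a b⟩
  le_self_add a b := (le_iff_exists_add _ _).2 ⟨b, rfl⟩

/-- The order is closed because `{(x, y) | x ≤ y}` is the image of the compact space `C × C`
under `(x, z) ↦ (x, x + z)`. -/
instance : OrderClosedTopology C where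
  isClosed_le' := by
    have : {p : C × C | p.1 ≤ p.2} = range fun q : C × C => (q.1, q.1 + q.2) := by
      ext ⟨x, y⟩
      simp only [mem_ofPred_eq, mem_range, Prod.mk.injEq, Prod.exists]
      exact ⟨fun h => let ⟨z, hz⟩ := (le_iff_exists_add x y).1 h; ⟨x, z, rfl, hz⟩,
        fun ⟨_, z, hx, hz⟩ => hx ▸ hz ▸ le_self_add⟩
    rw [this]
    exact (isCompact_range (by fun_prop)).isClosed

lemma psmul_le_psmul {x y : C} (t : PosReal) (h : x ≤ y) : psmul t x ≤ psmul t y := by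
  obtain ⟨z, rfl⟩ := exists_add_of_le h
  rw [psmul_add]
  exact le_self_add

lemma psmul_le_psmul_of_le {s t : PosReal} (h : s.1 ≤ t.1) (x : C) : psmul s x ≤ psmul t x := by
  rcases h.eq_or_lt with h | h
  · rw [Subtype.ext h]
  · rw [show t = s + ⟨t.1 - s.1, sub_pos.2 h⟩ from Subtype.ext (by simp), add_psmul]
    exact le_self_add

lemma psmul_le_self {t : PosReal} (h : t.1 ≤ 1) (x : C) : psmul t x ≤ x := by
  simpa [one_psmul] using psmul_le_psmul_of_le (t := 1) h x

lemma psmul_inv_psmul (t : PosReal) (x : C) : psmul t⁻¹ (psmul t x) = x := by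
  rw [psmul_mul, inv_mul_cancel, one_psmul]

lemma psmul_natCast_add_one (n : ℕ) (x : C) :
    psmul ⟨n + 1, n.cast_add_one_pos⟩ x = (n + 1) • x := by
  induction n with
  | zero =>
    rw [show (⟨((0 : ℕ) : ℝ) + 1, _⟩ : PosReal) = 1 from Subtype.ext (by simp), one_psmul,
      zero_add, one_nsmul]
  | succ k ih =>
    rw [show (⟨(k + 1 : ℕ) + 1, _⟩ : PosReal) = ⟨k + 1, k.cast_add_one_pos⟩ + 1 from
      Subtype.ext (by simp), add_psmul, ih, one_psmul, succ_nsmul _ (k + 1)]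

lemma psmul_le_nsmul (t : PosReal) (x : C) : psmul t x ≤ (⌈t.1⌉₊ + 1) • x := by
  rw [← psmul_natCast_add_one]
  exact psmul_le_psmul_of_le ((Nat.le_ceil _).trans (le_add_of_nonneg_right zero_le_one)) x

lemma continuous_const_psmul (t : PosReal) : Continuous fun x : C => psmul t x :=
  continuous_psmul.comp (continuous_const.prodMk continuous_id)

lemma continuous_psmul_const (x : C) : Continuous fun t : PosReal => psmul t x :=
  continuous_psmul.comp (continuous_id.prodMk continuous_const)

lemma IsIdem.add {u v : C} (hu : IsIdem u) (hv : IsIdem v) : IsIdem (u + v) := by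
  unfold IsIdem at *
  rw [add_add_add_comm, hu, hv]

lemma IsIdem.add_eq_of_le {v y : C} (hv : IsIdem v) (h : v ≤ y) : y + v = y := by
  obtain ⟨z, rfl⟩ := exists_add_of_le h
  rw [add_right_comm, hv]

lemma IsIdem.nsmul_add_one {v : C} (hv : IsIdem v) (n : ℕ) : (n + 1) • v = v := by
  induction n with
  | zero => exact one_nsmul v
  | succ k ih => rw [succ_nsmul, ih, hv]

lemma IsIdem.psmul_le {v : C} (hv : IsIdem v) (t : PosReal) : psmul t v ≤ v :=
  (psmul_le_nsmul t v).trans_eq (hv.nsmul_add_one _)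

lemma IsIdem.psmul_right {v : C} (hv : IsIdem v) (t : PosReal) : IsIdem (psmul t v) := by
  unfold IsIdem at *
  rw [← psmul_add, hv]

lemma IsIdem.psmul_eq {v : C} (hv : IsIdem v) (t : PosReal) : psmul t v = v :=
  (hv.psmul_le t).antisymm <| by
    simpa [psmul_inv_psmul] using (hv.psmul_right t).psmul_le t⁻¹

lemma isClosed_setOf_isIdem : IsClosed {v : C | IsIdem v} :=
  isClosed_eq (continuous_id.add continuous_id) continuous_id

noncomputable def halfPow (n : ℕ) : PosReal := ⟨2⁻¹ ^ n, by positivity⟩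

lemma halfPow_le_one (n : ℕ) : (halfPow n).1 ≤ 1 :=
  pow_le_one₀ (by norm_num) (by norm_num)

lemma tendsto_halfPow : Tendsto (fun n => (halfPow n).1) atTop (𝓝 0) :=
  tendsto_pow_atTop_nhds_zero_of_lt_one (by norm_num) (by norm_num)

lemma antitone_psmul_halfPow (x : C) : Antitone fun n => psmul (halfPow n) x :=
  fun _ _ h => psmul_le_psmul_of_le (pow_le_pow_of_le_one (by norm_num) (by norm_num) h) x

/-- The support idempotent `ε(x)`. -/
noncomputable def eps (x : C) : C :=
  (antitone_psmul_halfPow x).exists_isGLB_tendsto.choose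

lemma isGLB_eps (x : C) : IsGLB (range fun n => psmul (halfPow n) x) (eps x) :=
  (antitone_psmul_halfPow x).exists_isGLB_tendsto.choose_spec.1

lemma tendsto_eps (x : C) : Tendsto (fun n => psmul (halfPow n) x) atTop (𝓝 (eps x)) :=
  (antitone_psmul_halfPow x).exists_isGLB_tendsto.choose_spec.2

lemma eps_le_self (x : C) : eps x ≤ x := by
  simpa [halfPow, show (⟨1, one_pos⟩ : PosReal) = 1 from rfl, one_psmul] using
    (isGLB_eps x).1 ⟨0, rfl⟩

lemma add_eps (x : C) : x + eps x = x := by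
  have hscal : Tendsto (fun n => 1 + halfPow n) atTop (𝓝 (1 : PosReal)) := by
    rw [tendsto_subtype_rng]
    simpa using tendsto_halfPow.const_add 1
  have h := ((continuous_psmul_const x).tendsto 1).comp hscal
  simp only [Function.comp_def, add_psmul, one_psmul] at h
  exact tendsto_nhds_unique (tendsto_const_nhds.add (tendsto_eps x)) h

lemma le_psmul_of_add_eq {x z : C} (h : x + z = x) (s : PosReal) : z ≤ psmul s x := by
  have habs : ∀ n : ℕ, x + (n + 1) • z = x := fun n => by
    induction n with
    | zero => rwa [zero_add, one_nsmul]
    | succ k ih => rw [succ_nsmul, ← add_assoc, ih, h]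
  have : psmul s⁻¹ z ≤ x := (psmul_le_nsmul s⁻¹ z).trans ((habs _).symm ▸ le_add_self)
  simpa [psmul_mul, mul_inv_cancel, one_psmul] using psmul_le_psmul s this

lemma le_eps {x z : C} (h : x + z = x) : z ≤ eps x :=
  (isGLB_eps x).2 <| by
    rintro _ ⟨n, rfl⟩
    exact le_psmul_of_add_eq h _

lemma isSuppIdem_eps (x : C) : IsSuppIdem x (eps x) :=
  ⟨add_eps x, fun _ => le_eps⟩

lemma IsSuppIdem.eps_eq {x e : C} (h : IsSuppIdem x e) : eps x = e :=
  (h.2 _ (add_eps x)).antisymm (le_eps h.1)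

lemma isSuppIdem_iff_eps_eq {x e : C} : IsSuppIdem x e ↔ eps x = e :=
  ⟨IsSuppIdem.eps_eq, fun h => h ▸ isSuppIdem_eps x⟩

lemma isIdem_eps (x : C) : IsIdem (eps x) :=
  (le_eps (by rw [← add_assoc, add_eps, add_eps])).antisymm le_self_add

lemma eps_add (x y : C) : eps (x + y) = eps x + eps y := by
  refine tendsto_nhds_unique (tendsto_eps (x + y)) ?_
  simpa [psmul_add] using (tendsto_eps x).add (tendsto_eps y)

lemma eps_psmul (t : PosReal) (x : C) : eps (psmul t x) = eps x := by
  refine tendsto_nhds_unique (tendsto_eps (psmul t x)) ?_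
  rw [← (isIdem_eps x).psmul_eq t]
  simpa [Function.comp_def, psmul_mul, mul_comm] using
    ((continuous_const_psmul t).tendsto _).comp (tendsto_eps x)

lemma le_eps_of_isIdem {v x : C} (hv : IsIdem v) (h : v ≤ x) : v ≤ eps x :=
  le_eps (hv.add_eq_of_le h)

lemma IsIdem.eps_eq {v : C} (hv : IsIdem v) : eps v = v :=
  (eps_le_self v).antisymm (le_eps_of_isIdem hv le_rfl)

lemma IsIdem.isSuppIdem_self {v : C} (hv : IsIdem v) : IsSuppIdem v v :=
  isSuppIdem_iff_eps_eq.2 hv.eps_eq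

lemma IsSuppIdem.isIdem {x w : C} (h : IsSuppIdem x w) : IsIdem w :=
  h.eps_eq ▸ isIdem_eps x

lemma IsSuppIdem.le {x w : C} (h : IsSuppIdem x w) : w ≤ x :=
  h.eps_eq ▸ eps_le_self x

lemma IsSuppIdem.psmul {x w : C} (h : IsSuppIdem x w) (t : PosReal) :
    IsSuppIdem (psmul t x) w := by
  rw [isSuppIdem_iff_eps_eq, eps_psmul, h.eps_eq]

def IsConvex (U : Set C) : Prop :=
  ∀ y ∈ U, ∀ z ∈ U, ∀ s t : PosReal, s.1 + t.1 = 1 → psmul s y + psmul t z ∈ U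

lemma IsConvex.inter {U V : Set C} (hU : IsConvex U) (hV : IsConvex V) : IsConvex (U ∩ V) :=
  fun y hy z hz s t hst => ⟨hU y hy.1 z hz.1 s t hst, hV y hy.2 z hz.2 s t hst⟩

lemma IsConvex.add_mem {U : Set C} (hU : IsConvex U) {a b : C} (ha : IsIdem a) (hb : IsIdem b)
    (haU : a ∈ U) (hbU : b ∈ U) : a + b ∈ U := by
  simpa [ha.psmul_eq, hb.psmul_eq] using
    hU a haU b hbU ⟨2⁻¹, by norm_num⟩ ⟨2⁻¹, by norm_num⟩ (by norm_num)

lemma exists_isConvex_subset {x : C} {O : Set C} (hO : O ∈ 𝓝 x) :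
    ∃ U, IsOpen U ∧ x ∈ U ∧ IsConvex U ∧ U ⊆ O := by
  obtain ⟨O', hO'O, hO', hxO'⟩ := mem_nhds_iff.1 hO
  obtain ⟨U, hU, hxU, hUO', hconv⟩ := locally_convex x O' hO' hxO'
  exact ⟨U, hU, hxU, hconv, hUO'.trans hO'O⟩

lemma mem_of_forall_isConvex {K : Set C} (hK : IsClosed K) {w : C}
    (h : ∀ U, IsOpen U → w ∈ U → IsConvex U → (K ∩ closure U).Nonempty) : w ∈ K := by
  by_contra hw
  obtain ⟨t, ht, htc, htK⟩ := exists_mem_nhds_isClosed_subset (hK.isOpen_compl.mem_nhds hw)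
  obtain ⟨U, hU, hwU, hconv, hUt⟩ := exists_isConvex_subset ht
  obtain ⟨a, haK, haU⟩ := h U hU hwU hconv
  exact htK (htc.closure_subset_iff.2 hUt haU) haK

/-- For each convex open `U ∋ w`, the idempotents in `U` form an upward directed set (by
convexity); their suprema form a downward directed family whose infimum is `w` (by local
convexity), so compactness of `w` puts one of them below `w`. -/
lemma IsCompactIdem.exists_nhds_isIdem_le {w : C} (hw : IsCompactIdem w) :
    ∃ U ∈ 𝓝 w, ∀ v ∈ U, IsIdem v → v ≤ w := by
  by_contra! hbad
  let ι := {U : Set C // IsOpen U ∧ w ∈ U ∧ IsConvex U}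
  have hsup (U : ι) : ∃ V, IsLUB {c | IsIdem c ∧ c ∈ U.1} V ∧
      V ∈ closure {c | IsIdem c ∧ c ∈ U.1} :=
    DirectedOn.exists_isLUB_mem_closure ⟨w, hw.1, U.2.2.1⟩ fun a ha b hb =>
      ⟨a + b, ⟨ha.1.add hb.1, U.2.2.2.add_mem ha.1 hb.1 ha.2 hb.2⟩, le_self_add, le_add_self⟩
  choose V hVlub hVcl using hsup
  have hVidem (U : ι) : IsIdem (V U) :=
    closure_minimal (fun c hc => hc.1) isClosed_setOf_isIdem (hVcl U)
  have hVU (U : ι) : V U ∈ closure U.1 := closure_mono (fun c hc => hc.2) (hVcl U)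
  have hdir : DirectedOn (· ≥ ·) (range V) := by
    rintro _ ⟨U, rfl⟩ _ ⟨U', rfl⟩
    let U'' : ι := ⟨U.1 ∩ U'.1, U.2.1.inter U'.2.1, ⟨U.2.2.1, U'.2.2.1⟩, U.2.2.2.inter U'.2.2.2⟩
    exact ⟨V U'', ⟨U'', rfl⟩, (hVlub U'').mono (hVlub U) fun c hc => ⟨hc.1, hc.2.1⟩,
      (hVlub U'').mono (hVlub U') fun c hc => ⟨hc.1, hc.2.2⟩⟩
  have : Nonempty ι := ⟨⟨univ, isOpen_univ, trivial, fun _ _ _ _ _ _ _ => trivial⟩⟩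
  obtain ⟨m, hm, -⟩ := DirectedOn.exists_isGLB_mem_closure (range_nonempty V) hdir
  have hmw : m ≤ w := mem_of_forall_isConvex (isClosed_Ici (a := m)) fun U hU hwU hconv =>
    ⟨V ⟨U, hU, hwU, hconv⟩, hm.1 ⟨_, rfl⟩, hVU ⟨U, hU, hwU, hconv⟩⟩
  obtain ⟨_, ⟨U, rfl⟩, hUw⟩ :=
    hw.2 (range V) (range_nonempty V) (by simpa using hVidem) hdir m hm hmw
  obtain ⟨c, hcU, hc, hcw⟩ := hbad U.1 (U.2.1.mem_nhds U.2.2.1)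
  exact hcw (((hVlub U).1 ⟨hc, hcU⟩).trans hUw)

lemma le_eps_of_tendsto {α : Type*} {l : Filter α} [l.NeBot] {u : α → C} {x e : C}
    (hu : Tendsto u l (𝓝 x)) (he : Tendsto (fun a => eps (u a)) l (𝓝 e)) : e ≤ eps x :=
  le_eps <| tendsto_nhds_unique (by simpa [add_eps] using hu.add he) hu

lemma isSuppIdem_add_iff_eps_le {w : C} (hw : IsIdem w) (x : C) :
    IsSuppIdem (x + w) w ↔ eps (x + w) ≤ w := by
  rw [isSuppIdem_iff_eps_eq]
  exact ⟨le_of_eq, fun h => h.antisymm (le_eps_of_isIdem hw le_add_self)⟩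

lemma tendsto_eps_add_nhds {w x : C} (hx : IsSuppIdem (x + w) w) :
    Tendsto (fun y => eps (y + w)) (𝓝 x) (𝓝 w) := by
  refine tendsto_nhds_of_unique_mapClusterPt fun e he => ?_
  obtain ⟨𝒰, h𝒰, he⟩ := mapClusterPt_iff_ultrafilter.1 he
  have hadd : Tendsto (fun y => y + w) 𝒰 (𝓝 (x + w)) :=
    ((continuous_add_const w).tendsto x).mono_left h𝒰
  refine (hx.eps_eq ▸ le_eps_of_tendsto hadd he).antisymm ?_
  exact ge_of_tendsto he (Eventually.of_forall fun y => le_eps_of_isIdem hx.isIdem le_add_self)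

lemma isOpen_setOf_isSuppIdem_add {w : C} (hw : IsCompactIdem w) :
    IsOpen {x : C | IsSuppIdem (x + w) w} := by
  obtain ⟨U, hU, hUw⟩ := hw.exists_nhds_isIdem_le
  refine isOpen_iff_mem_nhds.2 fun x hx => ?_
  filter_upwards [tendsto_eps_add_nhds hx hU] with y hy
  exact (isSuppIdem_add_iff_eps_le hw.1 y).2 (hUw _ hy (isIdem_eps _))

section sublevel

variable {w : C} {g : {x : C // IsSuppIdem x w} → ℝ≥0∞}

def sublevel (w : C) (g : {x : C // IsSuppIdem x w} → ℝ≥0∞) (M : ℝ≥0∞) : Set C :=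
  Subtype.val '' {y | g y ≤ M}

def nullFilter (w : C) (g : {x : C // IsSuppIdem x w} → ℝ≥0∞) : Filter C :=
  map Subtype.val (comap g (𝓝 0))

lemma hasBasis_nullFilter (g : {x : C // IsSuppIdem x w} → ℝ≥0∞) :
    (nullFilter w g).HasBasis (fun δ => 0 < δ) (sublevel w g) :=
  (ENNReal.nhds_zero_basis_Iic.comap g).map Subtype.val

lemma sublevel_mono (g : {x : C // IsSuppIdem x w} → ℝ≥0∞) {M M' : ℝ≥0∞} (h : M ≤ M') :
    sublevel w g M ⊆ sublevel w g M' :=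
  image_mono fun _ hy => le_trans hy h

lemma mem_sublevel_iff {M : ℝ≥0∞} {x : C} :
    x ∈ sublevel w g M ↔ ∃ h : IsSuppIdem x w, g ⟨x, h⟩ ≤ M :=
  ⟨fun ⟨y, hy, hyx⟩ => ⟨hyx ▸ y.2, by subst hyx; exact hy⟩, fun ⟨h, hM⟩ => ⟨⟨x, h⟩, hM, rfl⟩⟩

lemma sublevel_subset_Ici (g : {x : C // IsSuppIdem x w} → ℝ≥0∞) (M : ℝ≥0∞) :
    sublevel w g M ⊆ Ici w := by
  rintro _ ⟨y, -, rfl⟩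
  exact y.2.le

lemma psmul_mem_sublevel (hg : MemAPlus w g) {y : C} {M : ℝ≥0∞} (hy : y ∈ sublevel w g M)
    (t : PosReal) : psmul t y ∈ sublevel w g (ENNReal.ofReal t.1 * M) := by
  obtain ⟨y, hyM, rfl⟩ := hy
  refine ⟨⟨psmul t y, y.2.psmul t⟩, ?_, rfl⟩
  rw [mem_ofPred_eq, hg.2.2.2.1 t y _ rfl]
  gcongr
  exact hyM

lemma psmul_mem_sublevel_of_le_one (hg : MemAPlus w g) {y : C} {M : ℝ≥0∞}
    (hy : y ∈ sublevel w g M) {t : PosReal} (ht : t.1 ≤ 1) : psmul t y ∈ sublevel w g M :=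
  sublevel_mono g (mul_le_of_le_one_left zero_le (ENNReal.ofReal_le_one.2 ht))
    (psmul_mem_sublevel hg hy t)

lemma apply_le_of_mem_closure_sublevel (hg : MemAPlus w g) {x : {x : C // IsSuppIdem x w}}
    {M : ℝ≥0∞} (h : x.1 ∈ closure (sublevel w g M)) : g x ≤ M := by
  have : x ∈ closure {y | g y ≤ M} := closure_subtype.2 h
  rwa [(isClosed_le hg.1 continuous_const).closure_eq] at this

lemma le_of_clusterPt_nullFilter {q : C} (hq : ClusterPt q (nullFilter w g)) : w ≤ q :=
  closure_minimal (sublevel_subset_Ici g 1) isClosed_Ici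
    ((hasBasis_nullFilter g).clusterPt_iff_forall_mem_closure.1 hq 1 one_pos)

lemma clusterPt_nullFilter_psmul (hg : MemAPlus w g) {q : C}
    (hq : ClusterPt q (nullFilter w g)) {t : PosReal} (ht : t.1 ≤ 1) :
    ClusterPt (psmul t q) (nullFilter w g) :=
  hq.map (continuous_const_psmul t).continuousAt <|
    ((hasBasis_nullFilter g).tendsto_iff (hasBasis_nullFilter g)).2 fun δ hδ =>
      ⟨δ, hδ, fun _ hy => psmul_mem_sublevel_of_le_one hg hy ht⟩

lemma clusterPt_nullFilter_eps (hg : MemAPlus w g) {q : C}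
    (hq : ClusterPt q (nullFilter w g)) : ClusterPt (eps q) (nullFilter w g) :=
  isClosed_setOfPred_clusterPt.mem_of_tendsto (tendsto_eps q)
    (Eventually.of_forall fun n => clusterPt_nullFilter_psmul hg hq (halfPow_le_one n))

lemma eq_of_clusterPt_nullFilter (hg : MemAPlus w g) {q : C}
    (hq : ClusterPt q (nullFilter w g)) (hqw : IsSuppIdem q w) : q = w := by
  refine (hg.2.2.2.2 ⟨q, hqw⟩).1 (nonpos_iff_eq_zero.1 ?_)
  refine le_of_forall_gt_imp_ge_of_dense fun δ hδ => apply_le_of_mem_closure_sublevel hg ?_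
  exact (hasBasis_nullFilter g).clusterPt_iff_forall_mem_closure.1 hq δ hδ

lemma exists_psmul_mem_frontier {U : Set C} (hU : IsOpen U) {y : C} {a : PosReal}
    (ha : a.1 ≤ 1) (hay : psmul a y ∈ U) (hy : y ∉ U) :
    ∃ s : PosReal, s.1 ≤ 1 ∧ psmul s y ∈ frontier U := by
  let φ : ℝ → C := fun r => psmul ⟨max r a.1, lt_max_of_lt_right a.2⟩ y
  have hφ : Continuous φ :=
    (continuous_psmul_const y).comp ((continuous_id.max continuous_const).subtype_mk _)
  have hφa : φ a.1 = psmul a y := by simp [φ]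
  have hφ1 : φ 1 = y := by simp [φ, max_eq_left ha, show (⟨1, one_pos⟩ : PosReal) = 1 from rfl,
    one_psmul]
  have hnot : ¬ closure U ∩ φ '' Icc a.1 1 ⊆ U := fun h =>
    hy (hφ1 ▸ (isPreconnected_Icc.image φ hφ.continuousOn).subset_of_closure_inter_subset hU
      ⟨φ a.1, ⟨a.1, ⟨le_rfl, ha⟩, rfl⟩, hφa ▸ hay⟩ h ⟨1, ⟨ha, le_rfl⟩, rfl⟩)
  obtain ⟨_, ⟨hcl, r, hr, rfl⟩, hrU⟩ := not_subset.1 hnot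
  exact ⟨_, max_le hr.2 ha, by rw [hU.frontier_eq]; exact ⟨hcl, hrU⟩⟩

/-- Points of `C_w` near `m` and outside `closure U` are scaled down onto the frontier of `U`
(where `U ∋ w` is reached since `2⁻ⁿ y → ε(y) = w`); a limit of these scaled points is `q`. -/
lemma exists_clusterPt_nullFilter_le_mem_frontier (hg : MemAPlus w g) {m : C}
    (hm : ClusterPt m (nullFilter w g)) {U : Set C} (hU : IsOpen U) (hwU : w ∈ U)
    (hmU : m ∉ closure U) :
    ∃ q, ClusterPt q (nullFilter w g) ∧ q ≤ m ∧ q ∈ frontier U := by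
  let Y : Set C := {y | IsSuppIdem y w} \ closure U
  have hcross (y : C) : ∃ s : PosReal, y ∈ Y → s.1 ≤ 1 ∧ psmul s y ∈ frontier U := by
    by_cases hy : y ∈ Y
    · obtain ⟨n, hn⟩ := ((tendsto_eps y).eventually (hU.mem_nhds (hy.1.eps_eq ▸ hwU))).exists
      obtain ⟨s, hs⟩ := exists_psmul_mem_frontier hU (halfPow_le_one n) hn
        fun h => hy.2 (subset_closure h)
      exact ⟨s, fun _ => hs⟩
    · exact ⟨1, fun h => absurd h hy⟩
  choose s hs using hcross
  have : (𝓝 m ⊓ nullFilter w g).NeBot := hm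
  obtain ⟨𝒰, h𝒰⟩ := exists_ultrafilter_le (𝓝 m ⊓ nullFilter w g)
  have h𝒰m : Tendsto id 𝒰 (𝓝 m) := h𝒰.trans inf_le_left
  have h𝒰g : ↑𝒰 ≤ nullFilter w g := h𝒰.trans inf_le_right
  have hCw : ∀ᶠ y in (𝒰 : Filter C), IsSuppIdem y w :=
    mem_of_superset (h𝒰g (image_mem_map univ_mem)) fun y ⟨y', _, hy'⟩ => hy' ▸ y'.2
  have hY : ∀ᶠ y in 𝒰, y ∈ Y :=
    hCw.and (h𝒰m (isClosed_closure.isOpen_compl.mem_nhds hmU))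
  have hq : Tendsto (fun y => psmul (s y) y) 𝒰 (𝓝 (𝒰.map fun y => psmul (s y) y).lim) :=
    (𝒰.map _).le_nhds_lim
  refine ⟨_, (ClusterPt.of_le_nhds hq).mono ?_, ?_, ?_⟩
  · refine (hasBasis_nullFilter g).tendsto_right_iff.2 fun δ hδ => ?_
    filter_upwards [h𝒰g ((hasBasis_nullFilter g).mem_of_mem hδ), hY] with y hyδ hyY
    exact psmul_mem_sublevel_of_le_one hg hyδ (hs y hyY).1
  · exact le_of_tendsto_of_tendsto hq h𝒰m (hY.mono fun y hy => psmul_le_self (hs y hy).1 y)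
  · exact isClosed_frontier.mem_of_tendsto hq (hY.mono fun y hy => (hs y hy).2)

lemma IsCompactIdem.exists_minimal_not_le (hw : IsCompactIdem w) {S : Set C} (hS : IsClosed S)
    (hSidem : ∀ u ∈ S, IsIdem u) {e : C} (heS : e ∈ S) (hew : ¬ e ≤ w) :
    ∃ m ≤ e, Minimal (fun u => u ∈ S ∧ ¬ u ≤ w) m := by
  let T : Set Cᵒᵈ := {u | OrderDual.ofDual u ∈ S ∧ ¬ OrderDual.ofDual u ≤ w}
  have hchain : ∀ c ⊆ T, IsChain (· ≤ ·) c → ∀ y ∈ c, ∃ lb ∈ T, ∀ z ∈ c, z ≤ lb := by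
    intro c hc hchain y hy
    have hdir : DirectedOn (· ≥ ·) (OrderDual.ofDual ⁻¹' c : Set C) := hchain.directedOn
    obtain ⟨k, hk, hkc⟩ := DirectedOn.exists_isGLB_mem_closure (α := C) ⟨y, hy⟩ hdir
    refine ⟨OrderDual.toDual k, ⟨closure_minimal (fun u hu => (hc hu).1) hS hkc, fun hkw => ?_⟩,
      fun z hz => hk.1 hz⟩
    obtain ⟨v, hv, hvw⟩ := hw.2 _ ⟨y, hy⟩ (fun u hu => hSidem u (hc hu).1) hdir k hk hkw
    exact (hc hv).2 hvw
  obtain ⟨m, hme, hm⟩ := zorn_le_nonempty₀ T hchain (OrderDual.toDual e) ⟨heS, hew⟩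
  exact ⟨OrderDual.ofDual m, hme, maximal_toDual.1 hm⟩

/-- A minimal idempotent cluster point `m` of `nullFilter w g` outside `Iic w` is impossible:
crossing the frontier of a neighbourhood of `w` that avoids `m` gives a cluster point `q ≤ m`
whose support idempotent is either `w` (forcing `q = w`) or, by minimality, `m` (forcing
`q = m`). -/
lemma not_minimal_clusterPt_nullFilter (hw : IsIdem w) (hg : MemAPlus w g) {m : C} :
    ¬ Minimal (fun u => (IsIdem u ∧ ClusterPt u (nullFilter w g)) ∧ ¬ u ≤ w) m := by
  rintro ⟨⟨⟨-, hm⟩, hmw⟩, hmin⟩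
  obtain ⟨t, ht, htc, htm⟩ := exists_mem_nhds_isClosed_subset
    (isOpen_compl_singleton.mem_nhds fun h : w = m => hmw h.ge)
  have hmU : m ∉ closure (interior t) := fun h => htm (closure_minimal interior_subset htc h) rfl
  obtain ⟨q, hq, hqm, hqU⟩ := exists_clusterPt_nullFilter_le_mem_frontier hg hm isOpen_interior
    (mem_interior_iff_mem_nhds.2 ht) hmU
  rw [isOpen_interior.frontier_eq] at hqU
  by_cases hqw : eps q ≤ w
  · have hq' : IsSuppIdem q w := isSuppIdem_iff_eps_eq.2
      (hqw.antisymm (le_eps_of_isIdem hw (le_of_clusterPt_nullFilter hq)))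
    exact hqU.2 (eq_of_clusterPt_nullFilter hg hq hq' ▸ mem_interior_iff_mem_nhds.2 ht)
  · have hmq :=
      hmin ⟨⟨isIdem_eps q, clusterPt_nullFilter_eps hg hq⟩, hqw⟩ ((eps_le_self q).trans hqm)
    exact hmU (hqm.antisymm (hmq.trans (eps_le_self q)) ▸ hqU.1)

lemma clusterPt_nullFilter_eps_of_mem_closure (hg : MemAPlus w g) {M : ℝ≥0∞} (hM : M ≠ ⊤)
    {z : C} (hz : z ∈ closure (sublevel w g M)) : ClusterPt (eps z) (nullFilter w g) := by
  refine (hasBasis_nullFilter g).clusterPt_iff_forall_mem_closure.2 fun δ hδ => ?_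
  have hlim : Tendsto (fun n => ENNReal.ofReal (halfPow n).1 * M) atTop (𝓝 0) := by
    simpa using ENNReal.Tendsto.mul_const (ENNReal.tendsto_ofReal tendsto_halfPow) (Or.inr hM)
  refine isClosed_closure.mem_of_tendsto (tendsto_eps z) ?_
  filter_upwards [(tendsto_order.1 hlim).2 δ hδ] with n hn
  exact closure_mono (sublevel_mono g hn.le)
    (map_mem_closure (continuous_const_psmul _) hz fun y hy => psmul_mem_sublevel hg hy _)

theorem isClosed_sublevel (hw : IsCompactIdem w) (hg : MemAPlus w g) {M : ℝ≥0∞} (hM : M ≠ ⊤) :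
    IsClosed (sublevel w g M) := by
  refine isClosed_of_closure_subset fun z hz => ?_
  have hez : eps z ≤ w := by
    by_contra hez
    obtain ⟨m, -, hm⟩ := hw.exists_minimal_not_le
      (isClosed_setOf_isIdem.inter isClosed_setOfPred_clusterPt) (fun u hu => hu.1)
      ⟨isIdem_eps z, clusterPt_nullFilter_eps_of_mem_closure hg hM hz⟩ hez
    exact not_minimal_clusterPt_nullFilter hw.1 hg hm
  have hzw : IsSuppIdem z w := isSuppIdem_iff_eps_eq.2 <| hez.antisymm <|
    le_eps_of_isIdem hw.1 (closure_minimal (sublevel_subset_Ici g M) isClosed_Ici hz)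
  exact ⟨⟨z, hzw⟩, apply_le_of_mem_closure_sublevel hg hz, rfl⟩

end sublevel

variable {w : C}

lemma MemA.apply_eq_zero_of_isSupp {f : C → ℝ≥0∞} (hf : MemA f) (hs : IsSupp f w) :
    f w = 0 := by
  obtain ⟨m, hm, hmZ⟩ := DirectedOn.exists_isLUB_mem_closure (A := {x | f x = 0}) ⟨0, hf.1.1⟩
    fun a ha b hb => ⟨a + b, by simp_all [hf.1.2.1], le_self_add, le_add_self⟩
  rw [← hm.unique hs]
  exact (isClosed_eq hf.2 continuous_const).closure_subset hmZ

lemma IsLinFun.apply_eq_top_of_not_eps_le {f : C → ℝ≥0∞} (hf : IsLinFun f) (hs : IsSupp f w)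
    {y : C} (hy : ¬ eps y ≤ w) : f y = ⊤ := by
  by_contra htop
  refine hy (hs.1 ((ENNReal.add_right_inj htop).1 ?_))
  rw [← hf.2.1, add_eps, add_zero]

lemma MemA.apply_ne_top_of_isSuppIdem {f : C → ℝ≥0∞} (hf : MemA f) (hfw : f w = 0) {x : C}
    (hx : IsSuppIdem x w) : f x ≠ ⊤ := by
  intro htop
  have htop' (n : ℕ) : f (psmul (halfPow n) x) = ⊤ := by
    rw [hf.1.2.2, htop, ENNReal.mul_top (by simpa using (halfPow n).2)]
  have h := (hf.2.tendsto _).comp (tendsto_eps x)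
  simp only [Function.comp_def, htop', hx.eps_eq, hfw] at h
  exact ENNReal.top_ne_zero (tendsto_nhds_unique tendsto_const_nhds h)

lemma MemA.memAPlus_restrict {f : C → ℝ≥0∞} (hf : MemA f) (hs : IsSupp f w) :
    MemAPlus w fun x : {x : C // IsSuppIdem x w} => f x.1 := by
  have hfw := hf.apply_eq_zero_of_isSupp hs
  refine ⟨hf.2.comp continuous_subtype_val, fun x => hf.apply_ne_top_of_isSuppIdem hfw x.2,
    fun x y z h => ?_, fun t x y h => ?_, fun x => ⟨fun h0 => (hs.1 h0).antisymm x.2.le, ?_⟩⟩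
  · simp only [← h, hf.1.2.1]
  · simp only [← h, hf.1.2.2]
  · intro h
    simpa [h] using hfw

/-- On `{x | x + w ∉ C_w}` every `g ∈ A(C)` with support `w` is `⊤`, so only `C_w` matters. -/
lemma le_of_restrict_le (hw : IsIdem w) {f g : C → ℝ≥0∞} (hf : MemA f) (hfs : IsSupp f w)
    (hg : MemA g) (hgs : IsSupp g w) (h : ∀ x : {x : C // IsSuppIdem x w}, f x ≤ g x) :
    f ≤ g := by
  intro x
  have hadd {φ : C → ℝ≥0∞} (hφ : MemA φ) (hφs : IsSupp φ w) : φ (x + w) = φ x := by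
    rw [hφ.1.2.1, hφ.apply_eq_zero_of_isSupp hφs, add_zero]
  rw [← hadd hf hfs, ← hadd hg hgs]
  by_cases hx : IsSuppIdem (x + w) w
  · exact h ⟨x + w, hx⟩
  · rw [hg.1.apply_eq_top_of_not_eps_le hgs (mt (isSuppIdem_add_iff_eps_le hw x).2 hx)]
    exact le_top

lemma isSuppIdem_add_add_iff (hw : IsIdem w) (x y : C) :
    IsSuppIdem (x + y + w) w ↔ IsSuppIdem (x + w) w ∧ IsSuppIdem (y + w) w := by
  simp only [isSuppIdem_add_iff_eps_le hw]
  rw [show x + y + w = x + w + (y + w) by rw [add_add_add_comm, hw], eps_add]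
  exact ⟨fun h => ⟨le_self_add.trans h, le_add_self.trans h⟩,
    fun h => (add_le_add h.1 h.2).trans_eq hw⟩

lemma isSuppIdem_psmul_add_iff (hw : IsIdem w) (t : PosReal) (x : C) :
    IsSuppIdem (psmul t x + w) w ↔ IsSuppIdem (x + w) w := by
  rw [← hw.psmul_eq t, ← psmul_add, hw.psmul_eq t, isSuppIdem_iff_eps_eq, isSuppIdem_iff_eps_eq,
    eps_psmul]

open Classical in
/-- The inverse of restriction to `C_w`. -/
noncomputable def extendTop (w : C) (g : {x : C // IsSuppIdem x w} → ℝ≥0∞) (x : C) : ℝ≥0∞ :=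
  if h : IsSuppIdem (x + w) w then g ⟨x + w, h⟩ else ⊤

section extendTop

variable {g : {x : C // IsSuppIdem x w} → ℝ≥0∞}

lemma extendTop_of_isSuppIdem {x : C} (h : IsSuppIdem (x + w) w) :
    extendTop w g x = g ⟨x + w, h⟩ :=
  dif_pos h

lemma extendTop_of_not_isSuppIdem {x : C} (h : ¬ IsSuppIdem (x + w) w) : extendTop w g x = ⊤ :=
  dif_neg h

lemma extendTop_val (x : {x : C // IsSuppIdem x w}) : extendTop w g x.1 = g x := by
  rw [extendTop_of_isSuppIdem (x.2.1.symm ▸ x.2)]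
  exact congrArg g (Subtype.ext x.2.1)

lemma isLinFun_extendTop (hw : IsIdem w) (hg : MemAPlus w g) : IsLinFun (extendTop w g) := by
  refine ⟨?_, fun x y => ?_, fun t x => ?_⟩
  · have h0 : IsSuppIdem (0 + w) w := by rw [zero_add]; exact hw.isSuppIdem_self
    rw [extendTop_of_isSuppIdem h0]
    exact (hg.2.2.2.2 _).2 (zero_add w)
  · by_cases hxy : IsSuppIdem (x + y + w) w
    · obtain ⟨hx, hy⟩ := (isSuppIdem_add_add_iff hw x y).1 hxy
      rw [extendTop_of_isSuppIdem hxy, extendTop_of_isSuppIdem hx, extendTop_of_isSuppIdem hy]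
      exact hg.2.2.1 _ _ _ (by rw [add_add_add_comm, hw])
    · rw [extendTop_of_not_isSuppIdem hxy]
      rcases not_and_or.1 (mt (isSuppIdem_add_add_iff hw x y).2 hxy) with h | h
      · rw [extendTop_of_not_isSuppIdem h, top_add]
      · rw [extendTop_of_not_isSuppIdem h, add_top]
  · by_cases hx : IsSuppIdem (x + w) w
    · rw [extendTop_of_isSuppIdem ((isSuppIdem_psmul_add_iff hw t x).2 hx),
        extendTop_of_isSuppIdem hx]
      exact hg.2.2.2.1 t _ _ (by rw [psmul_add, hw.psmul_eq])
    · rw [extendTop_of_not_isSuppIdem hx,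
        extendTop_of_not_isSuppIdem (mt (isSuppIdem_psmul_add_iff hw t x).1 hx),
        ENNReal.mul_top (by simpa using t.2)]

lemma isSupp_extendTop (hw : IsIdem w) (hg : MemAPlus w g) : IsSupp (extendTop w g) w := by
  have hww : IsSuppIdem (w + w) w := by rw [hw]; exact hw.isSuppIdem_self
  have hw0 : extendTop w g w = 0 := by
    rw [extendTop_of_isSuppIdem hww]
    exact (hg.2.2.2.2 _).2 hw
  refine ⟨fun x hx => ?_, fun b hb => hb hw0⟩
  by_cases h : IsSuppIdem (x + w) w
  · rw [mem_ofPred_eq, extendTop_of_isSuppIdem h] at hx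
    exact le_self_add.trans_eq ((hg.2.2.2.2 _).1 hx)
  · rw [mem_ofPred_eq, extendTop_of_not_isSuppIdem h] at hx
    exact absurd hx ENNReal.top_ne_zero

lemma lowerSemicontinuous_extendTop (hw : IsCompactIdem w) (hg : MemAPlus w g) :
    LowerSemicontinuous (extendTop w g) := by
  refine lowerSemicontinuous_iff_isClosed_preimage.2 fun M => ?_
  rcases eq_or_ne M ⊤ with rfl | hM
  · simp
  convert (isClosed_sublevel hw hg hM).preimage (continuous_add_const w) using 1
  ext x
  simp only [mem_preimage, mem_Iic, mem_sublevel_iff]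
  by_cases h : IsSuppIdem (x + w) w
  · simp [extendTop_of_isSuppIdem h, h]
  · simp [extendTop_of_not_isSuppIdem h, h, hM]

lemma continuous_extendTop (hw : IsCompactIdem w) (hg : MemAPlus w g) :
    Continuous (extendTop w g) := by
  refine continuous_iff_continuousAt.2 fun x => ?_
  by_cases hx : IsSuppIdem (x + w) w
  · refine (continuousOn_iff_continuous_domRestrict.2 ?_).continuousAt
      ((isOpen_setOf_isSuppIdem_add hw).mem_nhds hx)
    have : domRestrict {x | IsSuppIdem (x + w) w} (extendTop w g) = fun y => g ⟨y.1 + w, y.2⟩ :=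
      funext fun y => extendTop_of_isSuppIdem y.2
    rw [this]
    exact hg.1.comp ((continuous_subtype_val.add continuous_const).subtype_mk _)
  · exact ((lowerSemicontinuous_extendTop hw hg).lowerSemicontinuousAt x).continuousAt_of_eq_top
      (extendTop_of_not_isSuppIdem hx)

end extendTop

theorem exists_extension (hw : IsCompactIdem w) {g : {x : C // IsSuppIdem x w} → ℝ≥0∞}
    (hg : MemAPlus w g) :
    ∃ f : C → ℝ≥0∞, MemA f ∧ IsSupp f w ∧ (fun x : {x : C // IsSuppIdem x w} => f x.1) = g :=
  ⟨extendTop w g, ⟨isLinFun_extendTop hw.1 hg, continuous_extendTop hw hg⟩,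
    isSupp_extendTop hw.1 hg, funext extendTop_val⟩

end ECCone

theorem stmt_10_general {C : Type*} [ECCone C]
    (w : C) (hw : ECCone.IsCompactIdem w) :
    (∀ f : C → ℝ≥0∞, ECCone.MemA f → ECCone.IsSupp f w →
      ECCone.MemAPlus w (fun x : {x : C // ECCone.IsSuppIdem x w} => f x.1)) ∧
    (∀ f g : C → ℝ≥0∞,
      (fun x : {x : C // ECCone.IsSuppIdem x w} => (f + g) x.1) =
        (fun x : {x : C // ECCone.IsSuppIdem x w} => f x.1) +
          (fun x : {x : C // ECCone.IsSuppIdem x w} => g x.1)) ∧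
    (∀ (t : PosReal) (f : C → ℝ≥0∞),
      (fun x : {x : C // ECCone.IsSuppIdem x w} => (fun y => ENNReal.ofReal t.1 * f y) x.1) =
        fun x : {x : C // ECCone.IsSuppIdem x w} => ENNReal.ofReal t.1 * f x.1) ∧
    (∀ f g : C → ℝ≥0∞, ECCone.MemA f → ECCone.IsSupp f w → ECCone.MemA g →
      ECCone.IsSupp g w →
      (fun x : {x : C // ECCone.IsSuppIdem x w} => f x.1) =
        (fun x : {x : C // ECCone.IsSuppIdem x w} => g x.1) → f = g) ∧
    (∀ g : {x : C // ECCone.IsSuppIdem x w} → ℝ≥0∞, ECCone.MemAPlus w g →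
      ∃ f : C → ℝ≥0∞, ECCone.MemA f ∧ ECCone.IsSupp f w ∧
        (fun x : {x : C // ECCone.IsSuppIdem x w} => f x.1) = g) ∧
    (∀ f g : C → ℝ≥0∞, ECCone.MemA f → ECCone.IsSupp f w → ECCone.MemA g →
      ECCone.IsSupp g w →
      (f ≤ g ↔ (fun x : {x : C // ECCone.IsSuppIdem x w} => f x.1) ≤
        fun x : {x : C // ECCone.IsSuppIdem x w} => g x.1)) := by
  have hle := @ECCone.le_of_restrict_le C _ w hw.1
  refine ⟨fun f hf hs => hf.memAPlus_restrict hs, fun _ _ => rfl, fun _ _ => rfl,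
    fun f g hf hfs hg hgs h => (hle hf hfs hg hgs h.le).antisymm (hle hg hgs hf hfs h.ge),
    fun g hg => ECCone.exists_extension hw hg,
    fun f g hf hfs hg hgs => ⟨fun h x => h x.1, hle hf hfs hg hgs⟩⟩

/-- For a compact idempotent `w` of an extended Choquet cone with an
abundance of compact idempotents, the restriction map `f ↦ f|_{C_w}` is an ordered cone
isomorphism from `A_w(C) = {f ∈ A(C) : supp f = w}` onto `A₊(C_w)`: it is additive,
homogeneous, bijective, and an order isomorphism. -/
theorem stmt_10 {C : Type*} [ECCone C] (habund : ECCone.HasAbundantCompactIdem C)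
    (w : C) (hw : ECCone.IsCompactIdem w) :
    (∀ f : C → ℝ≥0∞, ECCone.MemA f → ECCone.IsSupp f w →
      ECCone.MemAPlus w (fun x : {x : C // ECCone.IsSuppIdem x w} => f x.1)) ∧
    (∀ f g : C → ℝ≥0∞,
      (fun x : {x : C // ECCone.IsSuppIdem x w} => (f + g) x.1) =
        (fun x : {x : C // ECCone.IsSuppIdem x w} => f x.1) +
          (fun x : {x : C // ECCone.IsSuppIdem x w} => g x.1)) ∧
    (∀ (t : PosReal) (f : C → ℝ≥0∞),
      (fun x : {x : C // ECCone.IsSuppIdem x w} => (fun y => ENNReal.ofReal t.1 * f y) x.1) =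
        fun x : {x : C // ECCone.IsSuppIdem x w} => ENNReal.ofReal t.1 * f x.1) ∧
    (∀ f g : C → ℝ≥0∞, ECCone.MemA f → ECCone.IsSupp f w → ECCone.MemA g →
      ECCone.IsSupp g w →
      (fun x : {x : C // ECCone.IsSuppIdem x w} => f x.1) =
        (fun x : {x : C // ECCone.IsSuppIdem x w} => g x.1) → f = g) ∧
    (∀ g : {x : C // ECCone.IsSuppIdem x w} → ℝ≥0∞, ECCone.MemAPlus w g →
      ∃ f : C → ℝ≥0∞, ECCone.MemA f ∧ ECCone.IsSupp f w ∧
        (fun x : {x : C // ECCone.IsSuppIdem x w} => f x.1) = g) ∧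
    (∀ f g : C → ℝ≥0∞, ECCone.MemA f → ECCone.IsSupp f w → ECCone.MemA g →
      ECCone.IsSupp g w →
      (f ≤ g ↔ (fun x : {x : C // ECCone.IsSuppIdem x w} => f x.1) ≤
        fun x : {x : C // ECCone.IsSuppIdem x w} => g x.1)) :=
  stmt_10_general w hw
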